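/- arXiv:1703.00268 — 2 statements merged into one kernel-verified Lean document; each statement's English description precedes it below -/
import Mathlib

section
/- If G is connected and {A,B} is a minimum bisection with organized partition {A₁,A₂,B₁,B₂}, then E(A₁,A₂) + E(B₁,B₂) ≠ 0. -/
open Finset

/-- Number of edges of `G` with one endpoint in `X` and the other in `Y`
(for disjoint `X`, `Y`). -/
def EC {V : Type*} [Fintype V] [DecidableEq V] (G : SimpleGraph V)
    [DecidableRel G.Adj] (X Y : Finset V) : ℕ :=
  ((X ×ˢ Y).filter (fun p => G.Adj p.1 p.2)).card

/-- `{R, S}` is a bisection of the vertex set. -/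
def IsBisection {V : Type*} [Fintype V] [DecidableEq V] (R S : Finset V) : Prop :=
  R ∪ S = Finset.univ ∧ Disjoint R S ∧ R.card = S.card

section Aux
variable {V : Type*} [Fintype V] [DecidableEq V] (G : SimpleGraph V) [DecidableRel G.Adj]

lemma EC_eq_zero_iff {X Y : Finset V} :
    EC G X Y = 0 ↔ ∀ x ∈ X, ∀ y ∈ Y, ¬ G.Adj x y := by
  simp [EC, Finset.card_eq_zero, Finset.filter_eq_empty_iff, Finset.mem_product]
  aesop

lemma EC_comm (X Y : Finset V) : EC G X Y = EC G Y X := by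
  unfold EC
  apply Finset.card_bij (fun p _ => Prod.swap p)
  · intro p hp
    simp only [Finset.mem_filter, Finset.mem_product] at hp ⊢
    exact ⟨⟨hp.1.2, hp.1.1⟩, hp.2.symm⟩
  · intro p _ q _ h; exact Prod.swap_injective h
  · intro p hp
    simp only [Finset.mem_filter, Finset.mem_product] at hp
    exact ⟨p.swap, by simp only [Finset.mem_filter, Finset.mem_product]; exact ⟨⟨hp.1.2, hp.1.1⟩, hp.2.symm⟩, by simp⟩

lemma EC_union_left (X X' Y : Finset V) (h : Disjoint X X') :
    EC G (X ∪ X') Y = EC G X Y + EC G X' Y := by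
  unfold EC
  rw [Finset.union_product, Finset.filter_union, Finset.card_union_of_disjoint]
  apply Finset.disjoint_filter_filter
  rw [Finset.disjoint_left]
  intro p hp hp'
  rw [Finset.mem_product] at hp hp'
  exact (Finset.disjoint_left.mp h hp.1) hp'.1

lemma EC_union_right (X Y Y' : Finset V) (h : Disjoint Y Y') :
    EC G X (Y ∪ Y') = EC G X Y + EC G X Y' := by
  rw [EC_comm, EC_union_left G Y Y' X h, EC_comm, EC_comm G Y']

end Aux

theorem stmt5 {V : Type*} [Fintype V] [DecidableEq V] (G : SimpleGraph V)
    [DecidableRel G.Adj] (n : ℕ) (A B A₁ A₂ B₁ B₂ : Finset V)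
    (hconn : G.Connected)
    (hcard : Fintype.card V = 4 * n)
    (hbis : IsBisection A B) (hA2n : A.card = 2 * n)
    (hmin : ∀ R S : Finset V, IsBisection R S → EC G A B ≤ EC G R S)
    (hA : A = A₁ ∪ A₂) (hA12 : Disjoint A₁ A₂)
    (hB : B = B₁ ∪ B₂) (hB12 : Disjoint B₁ B₂)
    (hA1 : A₁.card = n) (hA2 : A₂.card = n) (hB1 : B₁.card = n) (hB2 : B₂.card = n)
    (horg : ∀ A₁' A₂' B₁' B₂' : Finset V,
      A = A₁' ∪ A₂' → Disjoint A₁' A₂' → B = B₁' ∪ B₂' → Disjoint B₁' B₂' →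
      A₁'.card = n → A₂'.card = n → B₁'.card = n → B₂'.card = n →
      (EC G A₁ A₂ + EC G B₁ B₂ : ℤ) - EC G A₁ B₁ - EC G A₂ B₂ ≤
        (EC G A₁' A₂' + EC G B₁' B₂' : ℤ) - EC G A₁' B₁' - EC G A₂' B₂') :
    EC G A₁ A₂ + EC G B₁ B₂ ≠ 0 := by
  intro h0
  obtain ⟨hAA, hBB⟩ := Nat.add_eq_zero.mp h0
  obtain ⟨huniv, hAB, _⟩ := hbis
  -- n ≥ 1
  have hn : 0 < n := by
    have : 0 < Fintype.card V := Fintype.card_pos_iff.mpr hconn.nonempty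
    omega
  -- disjointness of the parts
  have dA1B1 : Disjoint A₁ B₁ :=
    (hAB.mono (hA ▸ Finset.subset_union_left) (hB ▸ Finset.subset_union_left))
  have dA1B2 : Disjoint A₁ B₂ :=
    (hAB.mono (hA ▸ Finset.subset_union_left) (hB ▸ Finset.subset_union_right))
  have dA2B1 : Disjoint A₂ B₁ :=
    (hAB.mono (hA ▸ Finset.subset_union_right) (hB ▸ Finset.subset_union_left))
  have dA2B2 : Disjoint A₂ B₂ :=
    (hAB.mono (hA ▸ Finset.subset_union_right) (hB ▸ Finset.subset_union_right))
  -- the swapped bisection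
  have hbis' : IsBisection (A₁ ∪ B₁) (A₂ ∪ B₂) := by
    refine ⟨?_, ?_, ?_⟩
    · rw [← huniv, hA, hB]
      ext x; simp; tauto
    · rw [Finset.disjoint_union_left, Finset.disjoint_union_right,
        Finset.disjoint_union_right]
      exact ⟨⟨hA12, dA1B2⟩, ⟨dA2B1.symm, hB12⟩⟩
    · rw [Finset.card_union_of_disjoint dA1B1, Finset.card_union_of_disjoint dA2B2,
        hA1, hA2, hB1, hB2]
  have hle := hmin _ _ hbis'
  have e1 : EC G A B = EC G A₁ B₁ + EC G A₁ B₂ + (EC G A₂ B₁ + EC G A₂ B₂) := by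
    rw [hA, hB, EC_union_left _ _ _ _ hA12, EC_union_right _ _ _ _ hB12,
      EC_union_right _ _ _ _ hB12]
  have e2 : EC G (A₁ ∪ B₁) (A₂ ∪ B₂)
      = EC G A₁ A₂ + EC G A₁ B₂ + (EC G B₁ A₂ + EC G B₁ B₂) := by
    rw [EC_union_left _ _ _ _ dA1B1, EC_union_right _ _ _ _ dA2B2,
      EC_union_right _ _ _ _ dA2B2]
  rw [e1, e2, hAA, hBB, EC_comm G B₁ A₂] at hle
  have hA1B1 : EC G A₁ B₁ = 0 := by omega
  have hA2B2 : EC G A₂ B₂ = 0 := by omega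
  -- now A₁ ∪ B₂ and A₂ ∪ B₁ have no edges between them, contradicting connectivity
  obtain ⟨a, ha⟩ := Finset.card_pos.mp (hA1 ▸ hn)
  obtain ⟨b, hb⟩ := Finset.card_pos.mp (hA2 ▸ hn)
  obtain ⟨w⟩ := hconn a b
  have haS : a ∈ (↑(A₁ ∪ B₂) : Set V) := by simp [ha]
  have hbS : b ∉ (↑(A₁ ∪ B₂) : Set V) := by
    simp only [Finset.coe_union, Set.mem_union, Finset.mem_coe]
    rintro (h | h)
    · exact (Finset.disjoint_left.mp hA12 h) hb
    · exact (Finset.disjoint_left.mp dA2B2 hb) h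
  obtain ⟨d, _, hdS, hdS'⟩ := w.exists_boundary_dart _ haS hbS
  have hadj : G.Adj d.fst d.snd := d.adj
  have hfst : d.fst ∈ A₁ ∪ B₂ := by
    simpa using hdS
  have hsnd : d.snd ∈ A₂ ∪ B₁ := by
    have : d.snd ∈ A ∪ B := by rw [huniv]; exact Finset.mem_univ _
    rw [hA, hB] at this
    simp only [Finset.coe_union, Set.mem_union, Finset.mem_coe, not_or] at hdS'
    simp only [Finset.mem_union] at this ⊢
    tauto
  rw [Finset.mem_union] at hfst hsnd
  rcases hfst with h1 | h1 <;> rcases hsnd with h2 | h2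
  · exact (EC_eq_zero_iff G).mp hAA _ h1 _ h2 hadj
  · exact (EC_eq_zero_iff G).mp hA1B1 _ h1 _ h2 hadj
  · exact (EC_eq_zero_iff G).mp hA2B2 _ h2 _ h1 hadj.symm
  · exact (EC_eq_zero_iff G).mp hBB _ h2 _ h1 hadj.symm
end

section
/- For a bisection {A,B} with ±1/√N indicator vector y, the minimum of xᵀLx over ±1/√N-valued vectors x with xᵀ𝟙 = 0 and yᵀx = 0 equals (4/N)·(E(A,B) + D_C), where D_C is the organized-partition value of {A,B}. -/
open Finset Matrix

section Aux

variable {V : Type*} [Fintype V] [DecidableEq V] (G : SimpleGraph V) [DecidableRel G.Adj]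

lemma EC_sum_aux (X Y : Finset V) :
    (EC G X Y : ℝ) = ∑ i ∈ X, ∑ j ∈ Y, (if G.Adj i j then (1:ℝ) else 0) := by
  rw [EC, Finset.card_filter, Finset.sum_product]
  push_cast
  rfl

lemma EC_comm_aux (X Y : Finset V) : (EC G X Y : ℝ) = EC G Y X := by
  rw [EC_sum_aux, EC_sum_aux, Finset.sum_comm]
  congr 1; ext j; congr 1; ext i
  simp [G.adj_comm]

lemma EC_scaled_aux (X Y : Finset V) (r : ℝ) :
    ∑ i ∈ X, ∑ j ∈ Y, (if G.Adj i j then r else 0) = r * EC G X Y := by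
  rw [EC_sum_aux, Finset.mul_sum]
  congr 1; ext i
  rw [Finset.mul_sum]
  congr 1; ext j
  simp [mul_ite]

lemma EC_union_left_aux (X X' Y : Finset V) (h : Disjoint X X') :
    (EC G (X ∪ X') Y : ℝ) = EC G X Y + EC G X' Y := by
  rw [EC_sum_aux, EC_sum_aux, EC_sum_aux, Finset.sum_union h]

lemma EC_union_right_aux (X Y Y' : Finset V) (h : Disjoint Y Y') :
    (EC G X (Y ∪ Y') : ℝ) = EC G X Y + EC G X Y' := by
  rw [EC_comm_aux, EC_comm_aux G X Y, EC_comm_aux G X Y', EC_union_left_aux _ _ _ _ h]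

lemma EC_key_aux (A₁ A₂ B₁ B₂ : Finset V)
    (hAB : Disjoint (A₁ ∪ A₂) (B₁ ∪ B₂)) (hA : Disjoint A₁ A₂) (hB : Disjoint B₁ B₂) :
    (EC G (A₁ ∪ B₁) (A₂ ∪ B₂) : ℝ) =
      EC G (A₁ ∪ A₂) (B₁ ∪ B₂) +
      ((EC G A₁ A₂ : ℝ) + EC G B₁ B₂ - EC G A₁ B₁ - EC G A₂ B₂) := by
  have h11 : Disjoint A₁ B₁ := hAB.mono Finset.subset_union_left Finset.subset_union_left
  have h22 : Disjoint A₂ B₂ := hAB.mono Finset.subset_union_right Finset.subset_union_right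
  rw [EC_union_left_aux _ _ _ _ h11, EC_union_right_aux _ _ _ _ h22,
      EC_union_right_aux _ _ _ _ h22, EC_union_left_aux _ _ _ _ hA,
      EC_union_right_aux _ _ _ _ hB, EC_union_right_aux _ _ _ _ hB]
  rw [EC_comm_aux G B₁ A₂]
  ring

lemma quad_aux (c : ℝ) (P : Finset V) :
    (fun i => if i ∈ P then c else -c) ⬝ᵥ
      ((G.lapMatrix ℝ) *ᵥ fun i => if i ∈ P then c else -c)
      = 4 * c ^ 2 * EC G P Pᶜ := by
  set x : V → ℝ := fun i => if i ∈ P then c else -c with hxdef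
  rw [← Matrix.toLinearMap₂'_apply', SimpleGraph.lapMatrix_toLinearMap₂']
  have hsplit : ∀ f : V → ℝ, ∑ i : V, f i = ∑ i ∈ P, f i + ∑ i ∈ Pᶜ, f i :=
    fun f => (Finset.sum_add_sum_compl P f).symm
  rw [hsplit]
  conv_lhs => enter [1,1,2,i]; rw [hsplit]
  conv_lhs => enter [1,2,2,i]; rw [hsplit]
  have hPP : ∑ i ∈ P, ∑ j ∈ P, (if G.Adj i j then (x i - x j)^2 else 0) = 0 := by
    apply Finset.sum_eq_zero; intro i hi
    apply Finset.sum_eq_zero; intro j hj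
    simp [hxdef, hi, hj]
  have hCC : ∑ i ∈ Pᶜ, ∑ j ∈ Pᶜ, (if G.Adj i j then (x i - x j)^2 else 0) = 0 := by
    apply Finset.sum_eq_zero; intro i hi
    apply Finset.sum_eq_zero; intro j hj
    rw [Finset.mem_compl] at hi hj
    simp [hxdef, hi, hj]
  have hPC : ∑ i ∈ P, ∑ j ∈ Pᶜ, (if G.Adj i j then (x i - x j)^2 else 0)
      = 4 * c ^ 2 * EC G P Pᶜ := by
    rw [← EC_scaled_aux]
    apply Finset.sum_congr rfl; intro i hi
    apply Finset.sum_congr rfl; intro j hj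
    rw [Finset.mem_compl] at hj
    simp only [hxdef, hi, hj, if_pos, if_neg, if_false, not_false_iff]
    congr 1
    ring
  have hCP : ∑ i ∈ Pᶜ, ∑ j ∈ P, (if G.Adj i j then (x i - x j)^2 else 0)
      = 4 * c ^ 2 * EC G Pᶜ P := by
    rw [← EC_scaled_aux]
    apply Finset.sum_congr rfl; intro i hi
    apply Finset.sum_congr rfl; intro j hj
    rw [Finset.mem_compl] at hi
    simp only [hxdef, hi, hj, if_pos, if_neg, if_false, not_false_iff]
    congr 1
    ring
  rw [Finset.sum_add_distrib, Finset.sum_add_distrib, hPP, hCC, hPC, hCP, ← EC_comm_aux]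
  ring

lemma sum_pm_aux (c : ℝ) (P : Finset V) :
    ∑ i : V, (if i ∈ P then c else -c) = ((P.card : ℝ) - (Pᶜ.card : ℝ)) * c := by
  rw [← Finset.sum_add_sum_compl P]
  rw [Finset.sum_congr rfl (fun i hi => if_pos hi),
      Finset.sum_congr rfl (fun i (hi : i ∈ Pᶜ) => if_neg (Finset.mem_compl.mp hi))]
  rw [Finset.sum_const, Finset.sum_const, nsmul_eq_mul, nsmul_eq_mul]
  ring

lemma dot_split_aux (c : ℝ) (A₁ A₂ B₁ B₂ : Finset V)
    (hU : (A₁ ∪ A₂) ∪ (B₁ ∪ B₂) = Finset.univ)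
    (hAB : Disjoint (A₁ ∪ A₂) (B₁ ∪ B₂))
    (hA : Disjoint A₁ A₂) (hB : Disjoint B₁ B₂) :
    ∑ i : V, (if i ∈ A₁ ∪ A₂ then c else -c) * (if i ∈ A₁ ∪ B₁ then c else -c)
      = ((A₁.card : ℝ) - A₂.card - B₁.card + B₂.card) * c ^ 2 := by
  have h11 : Disjoint A₁ B₁ := hAB.mono Finset.subset_union_left Finset.subset_union_left
  have h12 : Disjoint A₁ B₂ := hAB.mono Finset.subset_union_left Finset.subset_union_right
  have h21 : Disjoint A₂ B₁ := hAB.mono Finset.subset_union_right Finset.subset_union_left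
  have h22 : Disjoint A₂ B₂ := hAB.mono Finset.subset_union_right Finset.subset_union_right
  have hd1 : Disjoint A₁ (A₂ ∪ (B₁ ∪ B₂)) := by
    simp [Finset.disjoint_union_right, hA, h11, h12]
  have hd2 : Disjoint A₂ (B₁ ∪ B₂) := by
    simp [Finset.disjoint_union_right, h21, h22]
  rw [← hU]
  rw [Finset.union_assoc, Finset.sum_union hd1, Finset.sum_union hd2, Finset.sum_union hB]
  have e1 : ∑ i ∈ A₁, (if i ∈ A₁ ∪ A₂ then c else -c) * (if i ∈ A₁ ∪ B₁ then c else -c)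
      = (A₁.card : ℝ) * (c * c) := by
    rw [Finset.sum_congr rfl (fun i hi => by
      rw [if_pos (Finset.mem_union_left _ hi), if_pos (Finset.mem_union_left _ hi)]),
      Finset.sum_const, nsmul_eq_mul]
  have e2 : ∑ i ∈ A₂, (if i ∈ A₁ ∪ A₂ then c else -c) * (if i ∈ A₁ ∪ B₁ then c else -c)
      = (A₂.card : ℝ) * (c * -c) := by
    rw [Finset.sum_congr rfl (fun i hi => by
      rw [if_pos (Finset.mem_union_right _ hi), if_neg (by
        simp only [Finset.mem_union]
        push_neg
        exact ⟨Finset.disjoint_right.mp hA hi, Finset.disjoint_right.mp h21.symm hi⟩)]),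
      Finset.sum_const, nsmul_eq_mul]
  have e3 : ∑ i ∈ B₁, (if i ∈ A₁ ∪ A₂ then c else -c) * (if i ∈ A₁ ∪ B₁ then c else -c)
      = (B₁.card : ℝ) * (-c * c) := by
    rw [Finset.sum_congr rfl (fun i hi => by
      rw [if_neg (by
        simp only [Finset.mem_union]
        push_neg
        exact ⟨Finset.disjoint_right.mp h11 hi, Finset.disjoint_right.mp h21 hi⟩),
        if_pos (Finset.mem_union_right _ hi)]),
      Finset.sum_const, nsmul_eq_mul]
  have e4 : ∑ i ∈ B₂, (if i ∈ A₁ ∪ A₂ then c else -c) * (if i ∈ A₁ ∪ B₁ then c else -c)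
      = (B₂.card : ℝ) * (-c * -c) := by
    rw [Finset.sum_congr rfl (fun i hi => by
      rw [if_neg (by
        simp only [Finset.mem_union]
        push_neg
        exact ⟨Finset.disjoint_right.mp h12 hi, Finset.disjoint_right.mp h22 hi⟩),
        if_neg (by
        simp only [Finset.mem_union]
        push_neg
        exact ⟨Finset.disjoint_right.mp h12 hi, Finset.disjoint_right.mp hB hi⟩)]),
      Finset.sum_const, nsmul_eq_mul]
  rw [e1, e2, e3, e4]
  ring

lemma compl_union_aux (A B A₁ A₂ B₁ B₂ : Finset V)
    (hUn : A ∪ B = Finset.univ) (hDisj : Disjoint A B)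
    (hA12 : A = A₁ ∪ A₂) (hdA : Disjoint A₁ A₂)
    (hB12 : B = B₁ ∪ B₂) (hdB : Disjoint B₁ B₂) :
    (A₁ ∪ B₁)ᶜ = A₂ ∪ B₂ := by
  subst hA12 hB12
  have h11 : Disjoint A₁ B₁ := hDisj.mono Finset.subset_union_left Finset.subset_union_left
  have h12 : Disjoint A₁ B₂ := hDisj.mono Finset.subset_union_left Finset.subset_union_right
  have h21 : Disjoint A₂ B₁ := hDisj.mono Finset.subset_union_right Finset.subset_union_left
  have h22 : Disjoint A₂ B₂ := hDisj.mono Finset.subset_union_right Finset.subset_union_right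
  ext i
  have hiu : i ∈ A₁ ∨ i ∈ A₂ ∨ i ∈ B₁ ∨ i ∈ B₂ := by
    have : i ∈ (A₁ ∪ A₂) ∪ (B₁ ∪ B₂) := hUn ▸ Finset.mem_univ i
    simp only [Finset.mem_union] at this
    tauto
  simp only [Finset.mem_compl, Finset.mem_union]
  push_neg
  constructor
  · rintro ⟨h1, h2⟩; tauto
  · rintro (h | h)
    · exact ⟨Finset.disjoint_right.mp hdA h, Finset.disjoint_left.mp h21 h⟩
    · exact ⟨Finset.disjoint_right.mp h12 h, Finset.disjoint_right.mp hdB h⟩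

end Aux

theorem stmt18 {V : Type*} [Fintype V] [DecidableEq V] (G : SimpleGraph V)
    [DecidableRel G.Adj] (n : ℕ) (hn : 0 < n) (A B : Finset V) (DC : ℤ)
    (hcard : Fintype.card V = 4 * n)
    (hbis : IsBisection A B) (hA2n : A.card = 2 * n)
    (y : V → ℝ)
    (hy : ∀ i, y i = if i ∈ A then 1 / Real.sqrt (Fintype.card V)
                     else -1 / Real.sqrt (Fintype.card V))
    -- `D_C` is the organized-partition value of `{A,B}`
    (hDC : IsLeast {d : ℤ | ∃ A₁ A₂ B₁ B₂ : Finset V,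
      A = A₁ ∪ A₂ ∧ Disjoint A₁ A₂ ∧ B = B₁ ∪ B₂ ∧ Disjoint B₁ B₂ ∧
      A₁.card = n ∧ A₂.card = n ∧ B₁.card = n ∧ B₂.card = n ∧
      d = (EC G A₁ A₂ + EC G B₁ B₂ : ℤ) - EC G A₁ B₁ - EC G A₂ B₂} DC) :
    IsLeast {r : ℝ | ∃ x : V → ℝ,
        (∀ i, x i = 1 / Real.sqrt (Fintype.card V) ∨
              x i = -1 / Real.sqrt (Fintype.card V)) ∧
        (∑ i, x i) = 0 ∧ y ⬝ᵥ x = 0 ∧ r = x ⬝ᵥ ((G.lapMatrix ℝ) *ᵥ x)}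
      ((4 / (Fintype.card V : ℝ)) * ((EC G A B : ℝ) + (DC : ℝ))) := by
  obtain ⟨hUn, hDisj, hcardAB⟩ := hbis
  have hNpos : (0:ℝ) < (Fintype.card V : ℝ) := by
    rw [hcard]; positivity
  set c : ℝ := 1 / Real.sqrt (Fintype.card V) with hcdef
  have hsq : (0:ℝ) < Real.sqrt (Fintype.card V) := Real.sqrt_pos.mpr hNpos
  have hcpos : 0 < c := by rw [hcdef]; positivity
  have hc2 : c ^ 2 = 1 / (Fintype.card V : ℝ) := by
    rw [hcdef, div_pow, one_pow, Real.sq_sqrt hNpos.le]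
  have hneg : -1 / Real.sqrt (Fintype.card V) = -c := by rw [hcdef]; ring
  have hyc : y = fun i => if i ∈ A then c else -c := by
    funext i
    rw [hy i, hneg]
  constructor
  · -- membership
    obtain ⟨A₁, A₂, B₁, B₂, hA12, hdA, hB12, hdB, c1, c2, c3, c4, hdval⟩ := hDC.1
    have hPc : (A₁ ∪ B₁)ᶜ = A₂ ∪ B₂ :=
      compl_union_aux A B A₁ A₂ B₁ B₂ hUn hDisj hA12 hdA hB12 hdB
    have h11 : Disjoint A₁ B₁ := by
      refine hDisj.mono ?_ ?_ <;> [rw [hA12]; rw [hB12]] <;> exact Finset.subset_union_left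
    have h22 : Disjoint A₂ B₂ := by
      refine hDisj.mono ?_ ?_ <;> [rw [hA12]; rw [hB12]] <;> exact Finset.subset_union_right
    refine ⟨fun i => if i ∈ A₁ ∪ B₁ then c else -c, ?_, ?_, ?_, ?_⟩
    · intro i
      by_cases h : i ∈ A₁ ∪ B₁ <;> simp [h, hneg]
    · rw [sum_pm_aux, hPc]
      rw [Finset.card_union_of_disjoint h11, Finset.card_union_of_disjoint h22,
        c1, c2, c3, c4]
      ring
    · rw [hyc, dotProduct, hA12]
      rw [dot_split_aux c A₁ A₂ B₁ B₂ (by rw [← hA12, ← hB12]; exact hUn)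
        (by rw [← hA12, ← hB12]; exact hDisj) hdA hdB]
      rw [c1, c2, c3, c4]
      ring
    · rw [quad_aux, hPc, EC_key_aux G A₁ A₂ B₁ B₂ (by rw [← hA12, ← hB12]; exact hDisj) hdA hdB,
        ← hA12, ← hB12, hc2]
      have : (DC : ℝ) = (EC G A₁ A₂ : ℝ) + EC G B₁ B₂ - EC G A₁ B₁ - EC G A₂ B₂ := by
        rw [hdval]; push_cast; ring
      rw [← this]
      ring
  · -- lower bound
    rintro r ⟨x, hx1, hx2, hx3, hx4⟩
    set P : Finset V := Finset.univ.filter (fun i => x i = c) with hPdef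
    have hxfun : x = fun i => if i ∈ P then c else -c := by
      funext i
      by_cases h : x i = c
      · rw [if_pos (by simp [hPdef, h]), h]
      · rw [if_neg (by simp [hPdef, h]),
          (hx1 i).resolve_left h, hneg]
    set A₁ : Finset V := A ∩ P with hA₁def
    set A₂ : Finset V := A \ P with hA₂def
    set B₁ : Finset V := B ∩ P with hB₁def
    set B₂ : Finset V := B \ P with hB₂def
    have hA12 : A = A₁ ∪ A₂ := by
      rw [hA₁def, hA₂def]; ext i; simp only [Finset.mem_union, Finset.mem_inter,
        Finset.mem_sdiff]; tauto
    have hB12 : B = B₁ ∪ B₂ := by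
      rw [hB₁def, hB₂def]; ext i; simp only [Finset.mem_union, Finset.mem_inter,
        Finset.mem_sdiff]; tauto
    have hdA : Disjoint A₁ A₂ := by
      rw [hA₁def, hA₂def, Finset.disjoint_left]
      intro i hi hi'
      simp only [Finset.mem_inter, Finset.mem_sdiff] at hi hi'
      exact hi'.2 hi.2
    have hdB : Disjoint B₁ B₂ := by
      rw [hB₁def, hB₂def, Finset.disjoint_left]
      intro i hi hi'
      simp only [Finset.mem_inter, Finset.mem_sdiff] at hi hi'
      exact hi'.2 hi.2
    have h11 : Disjoint A₁ B₁ := by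
      refine hDisj.mono ?_ ?_
      · rw [hA₁def]; exact Finset.inter_subset_left
      · rw [hB₁def]; exact Finset.inter_subset_left
    have hPeq : P = A₁ ∪ B₁ := by
      rw [hA₁def, hB₁def]
      ext i
      have hiu : i ∈ A ∨ i ∈ B := by
        have : i ∈ A ∪ B := hUn ▸ Finset.mem_univ i
        simpa [Finset.mem_union] using this
      simp only [Finset.mem_union, Finset.mem_inter]
      tauto
    -- card facts
    have hcA : A₁.card + A₂.card = 2 * n := by
      rw [← Finset.card_union_of_disjoint hdA, ← hA12, hA2n]
    have hB2n : B.card = 2 * n := by rw [← hcardAB, hA2n]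
    have hcB : B₁.card + B₂.card = 2 * n := by
      rw [← Finset.card_union_of_disjoint hdB, ← hB12, hB2n]
    have hcP : A₁.card + B₁.card = P.card := by
      rw [hPeq, Finset.card_union_of_disjoint h11]
    have hPcard : P.card = 2 * n := by
      rw [hxfun] at hx2
      rw [sum_pm_aux] at hx2
      have h0 : ((P.card : ℝ) - (Pᶜ.card : ℝ)) = 0 := by
        rcases mul_eq_zero.mp hx2 with h | h
        · exact h
        · exact absurd h hcpos.ne'
      have h1 : (P.card : ℝ) = (Pᶜ.card : ℝ) := by linarith
      have h2 : P.card = Pᶜ.card := Nat.cast_inj.mp h1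
      have h3 : P.card + Pᶜ.card = Fintype.card V := Finset.card_add_card_compl P
      omega
    have hx3' : A₁.card + B₂.card = A₂.card + B₁.card := by
      rw [hyc, hxfun, dotProduct, hA12, hPeq] at hx3
      rw [dot_split_aux c A₁ A₂ B₁ B₂ (by rw [← hA12, ← hB12]; exact hUn)
        (by rw [← hA12, ← hB12]; exact hDisj) hdA hdB] at hx3
      have h0 : ((A₁.card : ℝ) - A₂.card - B₁.card + B₂.card) = 0 := by
        rcases mul_eq_zero.mp hx3 with h | h
        · exact h
        · exact absurd h (pow_ne_zero 2 hcpos.ne')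
      have h1 : (A₁.card : ℝ) + B₂.card = A₂.card + B₁.card := by linarith
      exact_mod_cast h1
    have hcards : A₁.card = n ∧ A₂.card = n ∧ B₁.card = n ∧ B₂.card = n := by omega
    obtain ⟨e1, e2, e3, e4⟩ := hcards
    -- the refinement value
    set d : ℤ := (EC G A₁ A₂ + EC G B₁ B₂ : ℤ) - EC G A₁ B₁ - EC G A₂ B₂ with hddef
    have hdmem : d ∈ {d : ℤ | ∃ A₁ A₂ B₁ B₂ : Finset V,
      A = A₁ ∪ A₂ ∧ Disjoint A₁ A₂ ∧ B = B₁ ∪ B₂ ∧ Disjoint B₁ B₂ ∧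
      A₁.card = n ∧ A₂.card = n ∧ B₁.card = n ∧ B₂.card = n ∧
      d = (EC G A₁ A₂ + EC G B₁ B₂ : ℤ) - EC G A₁ B₁ - EC G A₂ B₂} :=
      ⟨A₁, A₂, B₁, B₂, hA12, hdA, hB12, hdB, e1, e2, e3, e4, hddef⟩
    have hDCd : DC ≤ d := hDC.2 hdmem
    have hPc : Pᶜ = A₂ ∪ B₂ := by
      rw [hPeq]
      exact compl_union_aux A B A₁ A₂ B₁ B₂ hUn hDisj hA12 hdA hB12 hdB
    have hr : r = (4 / (Fintype.card V : ℝ)) * ((EC G A B : ℝ) + (d : ℝ)) := by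
      rw [hx4, hxfun, quad_aux, hPc, hPeq,
        EC_key_aux G A₁ A₂ B₁ B₂ (by rw [← hA12, ← hB12]; exact hDisj) hdA hdB,
        ← hA12, ← hB12, hc2]
      have : (d : ℝ) = (EC G A₁ A₂ : ℝ) + EC G B₁ B₂ - EC G A₁ B₁ - EC G A₂ B₂ := by
        rw [hddef]; push_cast; ring
      rw [this]
      ring
    rw [hr]
    have h4N : 0 < 4 / (Fintype.card V : ℝ) := by positivity
    have : (DC : ℝ) ≤ (d : ℝ) := Int.cast_le.mpr hDCd
    nlinarith [h4N, this]
end
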